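/- The generic is not a ground-model real: for every t : ℝ, letting Ḡ_t be the name whose pairs are ⟨q̂, Set.univ⟩ for each rational q with (↑q : ℝ) < t, there is no nonempty open J ⊆ ℝ with J ⊩ G = Ḡ_t. -/

import Mathlib

/-- Names over ℝ: a name is a family of pairs of a name and an open set of reals. -/
inductive Name : Type 1
  | mk (ι : Type) (elem : ι → Name) (cond : ι → Set ℝ) (hopen : ∀ i, IsOpen (cond i)) : Name

namespace Name

/-- The index type of the family of pairs of a name. -/
def idx : Name → Type
  | mk ι _ _ _ => ι

/-- The name component of the `i`-th pair. -/
def elem : (σ : Name) → σ.idx → Name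
  | mk _ e _ _ => e

/-- The open-set component of the `i`-th pair. -/
def cond : (σ : Name) → σ.idx → Set ℝ
  | mk _ _ c _ => c

theorem cond_isOpen : ∀ (σ : Name) (i : σ.idx), IsOpen (σ.cond i)
  | mk _ _ _ h => h

/-- Rank of a name, used for the recursive definition of forcing. -/
noncomputable def rank : Name → Ordinal.{0}
  | mk _ e _ _ => Ordinal.lsub fun i => rank (e i)

theorem rank_elem_lt : ∀ (σ : Name) (i : σ.idx), (σ.elem i).rank < σ.rank
  | mk ι e c h, i => by
    simpa [rank, elem] using Ordinal.lt_lsub (fun i => rank (e i)) i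

theorem lex_max_min_lt_left {a a' : Ordinal.{0}} (h : a' < a) (b : Ordinal.{0}) :
    Prod.Lex (· < ·) (· < ·) (max a' b, min a' b) (max a b, min a b) := by
  rcases lt_or_ge (max a' b) (max a b) with h1 | h1
  · exact Prod.Lex.left _ _ h1
  · have e : max a' b = max a b := le_antisymm (max_le_max h.le le_rfl) h1
    rw [e]
    apply Prod.Lex.right
    rcases le_total a b with hab | hab
    · rw [min_eq_left hab, min_eq_left (h.le.trans hab)]; exact h
    · have : max a b = a := max_eq_left hab
      rw [this] at e
      rcases le_total a' b with h2 | h2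
      · rw [max_eq_right h2] at e
        rw [min_eq_left h2, min_eq_right hab, e]; exact h
      · rw [max_eq_left h2] at e; exact absurd e h.ne

theorem lex_max_min_lt_right {b b' : Ordinal.{0}} (h : b' < b) (a : Ordinal.{0}) :
    Prod.Lex (· < ·) (· < ·) (max a b', min a b') (max a b, min a b) := by
  simpa only [max_comm a, min_comm a] using lex_max_min_lt_left h a

mutual
  /-- `feq σ τ J` means `J ⊩ σ = τ`. -/
  def feq (σ τ : Name) (J : Set ℝ) : Prop :=
    (∀ i : σ.idx, fmem (σ.elem i) τ (J ∩ σ.cond i)) ∧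
    (∀ j : τ.idx, fmem (τ.elem j) σ (J ∩ τ.cond j))
  termination_by (max σ.rank τ.rank, min σ.rank τ.rank)
  decreasing_by
    · exact lex_max_min_lt_left (rank_elem_lt σ i) τ.rank
    · simpa only [max_comm σ.rank, min_comm σ.rank] using
        lex_max_min_lt_right (rank_elem_lt τ j) σ.rank

  /-- `fmem σ τ J` means `J ⊩ σ ∈ τ`. -/
  def fmem (σ τ : Name) (J : Set ℝ) : Prop :=
    ∀ r ∈ J, ∃ (j : τ.idx) (J' : Set ℝ), IsOpen J' ∧ r ∈ J' ∩ τ.cond j ∧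
      feq σ (τ.elem j) (J' ∩ τ.cond j)
  termination_by (max σ.rank τ.rank, min σ.rank τ.rank)
  decreasing_by
    exact lex_max_min_lt_right (rank_elem_lt τ j) σ.rank
end

end Name

namespace Name

/-- Canonical name of a hereditary set (by ∈-recursion): pairs ⟨ŷ, univ⟩ for members y. -/
def ofPSet : PSet → Name
  | PSet.mk α A => Name.mk α (fun a => ofPSet (A a)) (fun _ => Set.univ) (fun _ => isOpen_univ)

/-- Canonical name of a ZF set. -/
noncomputable def canonical (x : ZFSet) : Name := ofPSet x.out

end Name

/-- The finite von Neumann ordinals as ZF sets. -/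
def natZF : ℕ → ZFSet
  | 0 => ∅
  | n+1 => insert (natZF n) (natZF n)

/-- Integers coded as ZF sets. -/
def intZF : ℤ → ZFSet := fun z => ZFSet.pair (natZF z.toNat) (natZF (-z).toNat)

/-- Rationals coded as ZF sets (as a pair of numerator and denominator). -/
def ratZF (q : ℚ) : ZFSet := ZFSet.pair (intZF q.num) (natZF q.den)

/-- The canonical name q̂ of a rational number q. -/
noncomputable def ratName (q : ℚ) : Name := Name.canonical (ratZF q)

/-- The generic name G: its pairs are ⟨q̂, J⟩ for q rational and J a nonempty
open interval all of whose members exceed q. -/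
noncomputable def generic : Name :=
  Name.mk {p : ℚ × ℝ × ℝ // (Set.Ioo p.2.1 p.2.2).Nonempty ∧
      ∀ x ∈ Set.Ioo p.2.1 p.2.2, (p.1 : ℝ) < x}
    (fun p => ratName p.1.1)
    (fun p => Set.Ioo p.1.2.1 p.1.2.2)
    (fun p => isOpen_Ioo)

/-- The ground-model name Ḡ_t of the Dedekind cut of a real t: its pairs are
⟨q̂, univ⟩ for rationals q below t. -/
noncomputable def groundReal (t : ℝ) : Name :=
  Name.mk {q : ℚ // (q : ℝ) < t} (fun q => ratName q.1)
    (fun _ => Set.univ) (fun _ => isOpen_univ)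

/-! Pick an interval `(a, b) ⊆ J` and a rational `q ∈ (a, b)`. Since `G` has the pair `⟨q̂, (q, b)⟩`,
`J ⊩ G = Ḡ_t` forces `q̂` into `Ḡ_t`, whence `q < t`. But then `J` forces `q̂ ∈ G`, and at a point
`r ∈ (a, q)` this needs a pair `⟨p̂, I⟩` of `G` with `r ∈ I` and `p = q`, whereas every such pair has
`p < r`. Rationals can be compared through forced equalities of their canonical names because a
nonempty condition forces `x̂ = ŷ` only when `x = y`. -/

namespace Name

theorem feq_comm {σ τ : Name} {J : Set ℝ} : feq σ τ J ↔ feq τ σ J := by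
  rw [feq, feq]
  exact And.comm

theorem fmem.exists_feq {σ τ : Name} {J : Set ℝ} (h : fmem σ τ J) {r : ℝ} (hr : r ∈ J) :
    ∃ (j : τ.idx) (J' : Set ℝ), r ∈ J' ∩ τ.cond j ∧ feq σ (τ.elem j) (J' ∩ τ.cond j) := by
  rw [fmem] at h
  obtain ⟨j, J', -, hrJ', hfeq⟩ := h r hr
  exact ⟨j, J', hrJ', hfeq⟩

theorem equiv_of_feq_ofPSet {x y : PSet} {S : Set ℝ} (hS : S.Nonempty)
    (h : feq (ofPSet x) (ofPSet y) S) : PSet.Equiv x y := by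
  induction x generalizing y S with
  | mk α A ih =>
    obtain ⟨β, B⟩ := y
    obtain ⟨r, hr⟩ := hS
    rw [feq] at h
    simp only [ofPSet, idx, elem, cond] at h
    refine ⟨fun a => ?_, fun b => ?_⟩
    · obtain ⟨b, J', hrJ', hfeq⟩ := (h.1 a).exists_feq ⟨hr, trivial⟩
      exact ⟨b, ih a ⟨r, hrJ'⟩ hfeq⟩
    · obtain ⟨a, J', hrJ', hfeq⟩ := (h.2 b).exists_feq ⟨hr, trivial⟩
      exact ⟨a, ih a ⟨r, hrJ'⟩ (feq_comm.1 hfeq)⟩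

theorem eq_of_feq_canonical {x y : ZFSet} {S : Set ℝ} (hS : S.Nonempty)
    (h : feq (canonical x) (canonical y) S) : x = y := by
  rw [← ZFSet.mk_out x, ← ZFSet.mk_out y]
  exact ZFSet.sound (equiv_of_feq_ofPSet hS h)

end Name

theorem natZF_mem_natZF {m n : ℕ} (h : m < n) : natZF m ∈ natZF n := by
  induction n with
  | zero => omega
  | succ n ih =>
    rcases Nat.lt_succ_iff_lt_or_eq.1 h with hlt | rfl
    · exact ZFSet.mem_insert_iff.2 (Or.inr (ih hlt))
    · exact ZFSet.mem_insert_iff.2 (Or.inl rfl)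

theorem natZF_injective : Function.Injective natZF := by
  intro m n h
  by_contra hne
  rcases Nat.lt_or_gt_of_ne hne with hlt | hlt
  · exact ZFSet.mem_irrefl _ (h ▸ natZF_mem_natZF hlt)
  · exact ZFSet.mem_irrefl _ (h ▸ natZF_mem_natZF hlt)

theorem intZF_injective : Function.Injective intZF := by
  intro z z' h
  obtain ⟨hpos, hneg⟩ := ZFSet.pair_injective h
  have := natZF_injective hpos
  have := natZF_injective hneg
  omega

theorem ratZF_injective : Function.Injective ratZF := by
  intro q q' h
  obtain ⟨hnum, hden⟩ := ZFSet.pair_injective h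
  exact Rat.ext (intZF_injective hnum) (natZF_injective hden)

theorem eq_of_feq_ratName {q q' : ℚ} {S : Set ℝ} (hS : S.Nonempty)
    (h : Name.feq (ratName q) (ratName q') S) : q = q' :=
  ratZF_injective (Name.eq_of_feq_canonical hS h)

theorem lt_of_fmem_generic {q : ℚ} {J : Set ℝ} (h : Name.fmem (ratName q) generic J)
    {r : ℝ} (hr : r ∈ J) : (q : ℝ) < r := by
  obtain ⟨p, J', hrJ', hfeq⟩ := h.exists_feq hr
  rw [eq_of_feq_ratName ⟨r, hrJ'⟩ hfeq]
  exact p.2.2 r hrJ'.2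

theorem lt_of_fmem_groundReal {q : ℚ} {t : ℝ} {S : Set ℝ}
    (h : Name.fmem (ratName q) (groundReal t) S) (hS : S.Nonempty) : (q : ℝ) < t := by
  obtain ⟨r, hr⟩ := hS
  obtain ⟨q', J', hrJ', hfeq⟩ := h.exists_feq hr
  rw [eq_of_feq_ratName ⟨r, hrJ'⟩ hfeq]
  exact q'.2

theorem generic_not_ground (t : ℝ) :
    ¬ ∃ J : Set ℝ, IsOpen J ∧ J.Nonempty ∧ Name.feq generic (groundReal t) J := by
  rintro ⟨J, hJ, hJne, hfeq⟩
  rw [Name.feq] at hfeq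
  obtain ⟨a, b, hab, hJab⟩ := hJ.exists_Ioo_subset hJne
  obtain ⟨q, haq, hqb⟩ := exists_rat_btwn hab
  by_cases hqt : (q : ℝ) < t
  · obtain ⟨r, har, hrq⟩ := exists_between haq
    have hrJ : r ∈ J ∩ Set.univ := ⟨hJab ⟨har, hrq.trans hqb⟩, trivial⟩
    exact hrq.not_gt (lt_of_fmem_generic (hfeq.2 ⟨q, hqt⟩) hrJ)
  · obtain ⟨s, hqs, hsb⟩ := exists_between hqb
    have hpair : (Set.Ioo (q : ℝ) b).Nonempty ∧ ∀ x ∈ Set.Ioo (q : ℝ) b, (q : ℝ) < x :=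
      ⟨⟨s, hqs, hsb⟩, fun x hx => hx.1⟩
    have hsJ : s ∈ J ∩ Set.Ioo (q : ℝ) b := ⟨hJab ⟨haq.trans hqs, hsb⟩, hqs, hsb⟩
    exact hqt (lt_of_fmem_groundReal (hfeq.1 ⟨(q, q, b), hpair⟩) ⟨s, hsJ⟩)
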